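/- For a fixed generator G, the discriminator D*(x) = p_data(x) / (p_data(x) + p_g(x)) maximizes the GAN value function V(G,D) = E_{x∼p_data}[log D(x)] + E_{x∼p_g}[log(1 − D(x))], pointwise: for all a, b > 0, the function t ↦ a·log t + b·log(1 − t) on (0,1) attains its maximum at t = a/(a+b). -/

import Mathlib

theorem gan_optimal_discriminator_pointwise (a b : ℝ) (ha : 0 < a) (hb : 0 < b) :
    (∀ t ∈ Set.Ioo (0:ℝ) 1,
      a * Real.log t + b * Real.log (1 - t) ≤
        a * Real.log (a / (a + b)) + b * Real.log (1 - a / (a + b))) ∧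
    (∀ t ∈ Set.Ioo (0:ℝ) 1, t ≠ a / (a + b) →
      a * Real.log t + b * Real.log (1 - t) <
        a * Real.log (a / (a + b)) + b * Real.log (1 - a / (a + b))) := by
  have hab : 0 < a + b := by linarith
  set s : ℝ := a / (a + b) with hs
  have hs0 : 0 < s := div_pos ha hab
  have hs1 : s < 1 := by rw [hs, div_lt_one hab]; linarith
  have h1s : 1 - s = b / (a + b) := by rw [hs]; field_simp; ring
  have key : ∀ t ∈ Set.Ioo (0:ℝ) 1,
      a * Real.log t + b * Real.log (1 - t) ≤
        a * Real.log s + b * Real.log (1 - s) ∧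
      (t ≠ s → a * Real.log t + b * Real.log (1 - t) <
        a * Real.log s + b * Real.log (1 - s)) := by
    intro t ⟨ht0, ht1⟩
    have h1t : 0 < 1 - t := by linarith
    have h1s' : 0 < 1 - s := by linarith
    have hlt : Real.log t = Real.log (t / s) + Real.log s := by
      rw [← Real.log_mul (by positivity) (ne_of_gt hs0)]
      rw [div_mul_cancel₀ _ (ne_of_gt hs0)]
    have hl1t : Real.log (1 - t) = Real.log ((1 - t) / (1 - s)) + Real.log (1 - s) := by
      rw [← Real.log_mul (by positivity) (ne_of_gt h1s')]
      rw [div_mul_cancel₀ _ (ne_of_gt h1s')]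
    have e1 : a * (t / s) = (a + b) * t := by
      rw [hs]; field_simp
    have e2 : b * ((1 - t) / (1 - s)) = (a + b) * (1 - t) := by
      rw [h1s]; field_simp
    have hle1 : Real.log (t / s) ≤ t / s - 1 :=
      Real.log_le_sub_one_of_pos (by positivity)
    have hle2 : Real.log ((1 - t) / (1 - s)) ≤ (1 - t) / (1 - s) - 1 :=
      Real.log_le_sub_one_of_pos (by positivity)
    constructor
    · rw [hlt, hl1t]
      nlinarith [mul_le_mul_of_nonneg_left hle1 ha.le,
        mul_le_mul_of_nonneg_left hle2 hb.le]
    · intro hne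
      have hne' : t / s ≠ 1 := by
        intro h; apply hne
        field_simp at h; linarith
      have hlt1 : Real.log (t / s) < t / s - 1 :=
        Real.log_lt_sub_one_of_pos (by positivity) hne'
      rw [hlt, hl1t]
      nlinarith [mul_lt_mul_of_pos_left hlt1 ha,
        mul_le_mul_of_nonneg_left hle2 hb.le]
  exact ⟨fun t ht => (key t ht).1, fun t ht hne => (key t ht).2 hne⟩
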